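/- arXiv:1902.06901 — 2 statements merged into one kernel-verified Lean document; each statement's English description precedes it below -/
import Mathlib

section
/- Let X be a locally compact, connected Hausdorff space, let ρ be a quasi-integral on C_c(X), and suppose the corresponding compact-finite topological measure μ_ρ assumes more than two values (i.e., its image on the open and closed subsets of X has more than two elements). Then there exist functions f₁, f₂ ∈ C_c(X) with f₁ ≥ 0, f₂ ≥ 0, f₁·f₂ = 0, and ρ(f₁) = ρ(f₂) = 1. -/
open scoped ENNReal CompactlySupported
open CompactlySupportedContinuousMap

namespace QLF

variable {X Y : Type*}

/-- Membership in the singly generated subalgebra `B(f)`: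
`g ∈ B(f)` iff `g = φ ∘ f` for some continuous `φ` with `φ 0 = 0`. -/
def InB [TopologicalSpace X] (f g : C_c(X, ℝ)) : Prop :=
  ∃ φ : C(ℝ, ℝ), φ 0 = 0 ∧ ∀ x, g x = φ (f x)

/-- A quasi-integral (quasi-linear functional) on `C_c(X)`. -/
structure IsQuasiIntegral [TopologicalSpace X] (ρ : C_c(X, ℝ) → ℝ) : Prop where
  smul : ∀ (a : ℝ) (f : C_c(X, ℝ)), ρ (a • f) = a * ρ f
  add : ∀ f g h : C_c(X, ℝ), InB f g → InB f h → ρ (g + h) = ρ g + ρ h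
  pos : ∀ f : C_c(X, ℝ), (∀ x, 0 ≤ f x) → 0 ≤ ρ f

/-- The value of the topological measure corresponding to `ρ` on an open set. -/
noncomputable def qiOpen [TopologicalSpace X] (ρ : C_c(X, ℝ) → ℝ) (U : Set X) : ℝ≥0∞ :=
  ⨆ (f : C_c(X, ℝ)) (_ : (∀ x, 0 ≤ f x ∧ f x ≤ 1) ∧ tsupport f ⊆ U), ENNReal.ofReal (ρ f)

open Classical in
/-- The topological measure corresponding to a quasi-integral `ρ`:
on open sets given by `qiOpen`, on other (closed) sets by outer regularity. -/
noncomputable def qiMeas [TopologicalSpace X] (ρ : C_c(X, ℝ) → ℝ) (A : Set X) : ℝ≥0∞ :=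
  if IsOpen A then qiOpen ρ A
  else ⨅ (U : Set X) (_ : IsOpen U ∧ A ⊆ U), qiOpen ρ U

/-- A topological measure on `X` (as a set function on all sets; only its values on
open and closed sets are constrained/meaningful). -/
def IsTopMeasure [TopologicalSpace X] (μ : Set X → ℝ≥0∞) : Prop :=
  (∀ A B : Set X, Disjoint A B → (IsCompact A ∨ IsOpen A) → (IsCompact B ∨ IsOpen B) →
      (IsCompact (A ∪ B) ∨ IsOpen (A ∪ B)) → μ (A ∪ B) = μ A + μ B) ∧
  (∀ U : Set X, IsOpen U → μ U = ⨆ (K : Set X) (_ : IsCompact K ∧ K ⊆ U), μ K) ∧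
  (∀ F : Set X, IsClosed F → μ F = ⨅ (U : Set X) (_ : IsOpen U ∧ F ⊆ U), μ U)

/-- A simple topological measure: assumes only the values 0 and 1 on open and closed sets. -/
def IsSimpleTM [TopologicalSpace X] (μ : Set X → ℝ≥0∞) : Prop :=
  IsTopMeasure μ ∧ ∀ A : Set X, IsOpen A ∨ IsClosed A → μ A = 0 ∨ μ A = 1

/-- A simple quasi-integral: its corresponding topological measure assumes only 0 and 1. -/
def IsSimpleQI [TopologicalSpace X] (ρ : C_c(X, ℝ) → ℝ) : Prop :=
  ∀ A : Set X, IsOpen A ∨ IsClosed A → qiMeas ρ A = 0 ∨ qiMeas ρ A = 1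

/-- An almost simple quasi-integral: its corresponding topological measure is a positive
scalar multiple of a simple topological measure. -/
def IsAlmostSimpleQI [TopologicalSpace X] (ρ : C_c(X, ℝ) → ℝ) : Prop :=
  ∃ (c : ℝ≥0∞) (μ' : Set X → ℝ≥0∞), 0 < c ∧ c ≠ ∞ ∧ IsSimpleTM μ' ∧
    ∀ A : Set X, IsOpen A ∨ IsClosed A → qiMeas ρ A = c * μ' A

/-- The composition `φ ∘ f` as an element of `C_c(X, ℝ)`, for continuous `φ` with `φ 0 = 0`. -/
noncomputable def compCc [TopologicalSpace X] (φ : C(ℝ, ℝ)) (hφ : φ 0 = 0)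
    (f : C_c(X, ℝ)) : C_c(X, ℝ) :=
  ⟨⟨fun x => φ (f x), φ.continuous.comp f.continuous⟩, f.hasCompactSupport'.comp_left hφ⟩

section Products

variable [TopologicalSpace X] [TopologicalSpace Y]

/-- The section `f_y ∈ C_c(X)` of `f ∈ C_c(X × Y)`, `f_y (x) = f (x, y)`. -/
noncomputable def fiberY [T2Space X] (f : C_c(X × Y, ℝ)) (y : Y) : C_c(X, ℝ) :=
  ⟨⟨fun x => f (x, y), f.continuous.comp (continuous_id.prodMk continuous_const)⟩,
    HasCompactSupport.intro (f.hasCompactSupport'.image continuous_fst)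
      (fun x hx => by
        by_contra h
        exact hx ⟨(x, y), subset_tsupport _ h, rfl⟩)⟩

/-- The section `f_x ∈ C_c(Y)` of `f ∈ C_c(X × Y)`, `f_x (y) = f (x, y)`. -/
noncomputable def fiberX [T2Space Y] (f : C_c(X × Y, ℝ)) (x : X) : C_c(Y, ℝ) :=
  ⟨⟨fun y => f (x, y), f.continuous.comp (continuous_const.prodMk continuous_id)⟩,
    HasCompactSupport.intro (f.hasCompactSupport'.image continuous_snd)
      (fun y hy => by
        by_contra h
        exact hy ⟨(x, y), subset_tsupport _ h, rfl⟩)⟩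

/-- `T_ρ(f) (y) = ρ (f_y)` as a bare function on `Y`. -/
noncomputable def Tmap [T2Space X] (ρ : C_c(X, ℝ) → ℝ) (f : C_c(X × Y, ℝ)) : Y → ℝ :=
  fun y => ρ (fiberY f y)

/-- `S_η(f) (x) = η (f_x)` as a bare function on `X`. -/
noncomputable def Smap [T2Space Y] (η : C_c(Y, ℝ) → ℝ) (f : C_c(X × Y, ℝ)) : X → ℝ :=
  fun x => η (fiberX f x)

open Classical in
/-- `T_ρ(f)` as an element of `C_c(Y, ℝ)` (when `ρ` is a quasi-integral, `T_ρ(f)` is indeed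
continuous with compact support, and this definition takes the first branch). -/
noncomputable def TCc [T2Space X] (ρ : C_c(X, ℝ) → ℝ) (f : C_c(X × Y, ℝ)) : C_c(Y, ℝ) :=
  if h : Continuous (Tmap ρ f) ∧ HasCompactSupport (Tmap ρ f)
  then ⟨⟨Tmap ρ f, h.1⟩, h.2⟩ else 0

open Classical in
/-- `S_η(f)` as an element of `C_c(X, ℝ)`. -/
noncomputable def SCc [T2Space Y] (η : C_c(Y, ℝ) → ℝ) (f : C_c(X × Y, ℝ)) : C_c(X, ℝ) :=
  if h : Continuous (Smap η f) ∧ HasCompactSupport (Smap η f)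
  then ⟨⟨Smap η f, h.1⟩, h.2⟩ else 0

/-- The repeated quasi-integral `(η × ρ) (f) = η (T_ρ (f))`. -/
noncomputable def prodQI [T2Space X] (η : C_c(Y, ℝ) → ℝ) (ρ : C_c(X, ℝ) → ℝ) :
    C_c(X × Y, ℝ) → ℝ := fun f => η (TCc ρ f)

/-- The repeated quasi-integral `(ρ × η) (f) = ρ (S_η (f))`. -/
noncomputable def prodQI' [T2Space Y] (ρ : C_c(X, ℝ) → ℝ) (η : C_c(Y, ℝ) → ℝ) :
    C_c(X × Y, ℝ) → ℝ := fun f => ρ (SCc η f)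

/-- The tensor product `(g ⊗ h) (x, y) = g (x) * h (y)` as an element of `C_c(X × Y, ℝ)`. -/
noncomputable def tensor (g : C_c(X, ℝ)) (h : C_c(Y, ℝ)) : C_c(X × Y, ℝ) :=
  ⟨⟨fun p => g p.1 * h p.2,
      (g.continuous.comp continuous_fst).mul (h.continuous.comp continuous_snd)⟩,
    HasCompactSupport.intro' (g.hasCompactSupport'.prod h.hasCompactSupport')
      ((isClosed_tsupport _).prod (isClosed_tsupport _))
      (fun p hp => by
        rcases not_and_or.mp (by simpa [Set.mem_prod] using hp) with h1 | h1
        · simp [image_eq_zero_of_notMem_tsupport h1]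
        · simp [image_eq_zero_of_notMem_tsupport h1])⟩

end Products

/-- A topological measure is subadditive (equivalently, extends to a Borel measure). -/
def IsSubadditiveOnOpens [TopologicalSpace X] (μ : Set X → ℝ≥0∞) : Prop :=
  ∀ U V : Set X, IsOpen U → IsOpen V → μ (U ∪ V) ≤ μ U + μ V

/-- `μ` is a positive scalar multiple of a point mass `δ_{x₀}` (on open and closed sets). -/
def IsPointMassMultiple [TopologicalSpace X] (μ : Set X → ℝ≥0∞) : Prop :=
  ∃ (c : ℝ≥0∞) (x₀ : X), 0 < c ∧ c ≠ ∞ ∧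
    ∀ A : Set X, IsOpen A ∨ IsClosed A →
      μ A = c * A.indicator (fun _ => (1 : ℝ≥0∞)) x₀

end QLF

/-!
If `μ_ρ` takes a third value, some open `U` has `0 < μ_ρ(U) < μ_ρ(X)`; pick `f ≥ 0` supported
in `U` with `ρ f > 0`. If no orthogonal pair as claimed existed, `ρ` would vanish on every
`g ≥ 0` with `f g = 0`. Choosing `w ∈ [0, 1]` equal to `1` on `supp f` and supported in `U`,
every `0 ≤ h ≤ 1` is dominated by some `0 ≤ b ≤ 1` equal to `1` on `supp h ∪ supp w`, and
quasi-linearity on the algebra generated by `w + b` splits `ρ b = ρ w + ρ (b - w) = ρ w`.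
Hence `μ_ρ(X) ≤ ρ w ≤ μ_ρ(U)`, a contradiction.
-/

namespace QLF

open Set

section

variable {X : Type*} [TopologicalSpace X]

lemma exists_cc_eqOn_one_of_isCompact_subset_isOpen [LocallyCompactSpace X] [T2Space X]
    {K U : Set X} (hK : IsCompact K) (hU : IsOpen U) (hKU : K ⊆ U) :
    ∃ w : C_c(X, ℝ), EqOn w 1 K ∧ tsupport w ⊆ U ∧ ∀ x, 0 ≤ w x ∧ w x ≤ 1 := by
  obtain ⟨w, hw1, hwc, hwU, hw01⟩ := exists_continuousMap_one_of_isCompact_subset_isOpen hK hU hKU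
  exact ⟨⟨w, hwc⟩, hw1, hwU, hw01⟩

namespace IsQuasiIntegral

variable {ρ : C_c(X, ℝ) → ℝ}

/-- Both `h` and `b - h` lie in `B(h + b)`: they are `φ (h + b)` and `(h + b) - 2 φ (h + b)`
for `φ t = max (t - 1) 0`. -/
lemma map_eq_add_map_sub (hρ : IsQuasiIntegral ρ) {h b : C_c(X, ℝ)} (h0 : ∀ x, 0 ≤ h x)
    (b1 : ∀ x, b x ≤ 1) (hb : ∀ x, h x ≠ 0 → b x = 1) : ρ b = ρ h + ρ (b - h) := by
  have hφ : ∀ x, h x = max (h x + b x - 1) 0 := fun x => by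
    rcases eq_or_ne (h x) 0 with hx | hx
    · rw [hx, zero_add, max_eq_right (by linarith [b1 x])]
    · rw [hb x hx, add_sub_cancel_right, max_eq_left (h0 x)]
  have hB := hρ.add (h + b) h (b - h)
    ⟨⟨fun t => max (t - 1) 0, by fun_prop⟩, by norm_num, fun x => hφ x⟩
    ⟨⟨fun t => t - 2 * max (t - 1) 0, by fun_prop⟩, by norm_num, fun x => by
      rw [CompactlySupportedContinuousMap.sub_apply, CompactlySupportedContinuousMap.add_apply,
        ContinuousMap.coe_mk, ← hφ x]
      ring⟩
  rwa [add_sub_cancel] at hB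

lemma map_le_of_eqOn_one (hρ : IsQuasiIntegral ρ) {h b : C_c(X, ℝ)} (h0 : ∀ x, 0 ≤ h x)
    (h1 : ∀ x, h x ≤ 1) (b0 : ∀ x, 0 ≤ b x) (b1 : ∀ x, b x ≤ 1)
    (hb : ∀ x, h x ≠ 0 → b x = 1) : ρ h ≤ ρ b := by
  have hsub : 0 ≤ ρ (b - h) := hρ.pos _ fun x => by
    rcases eq_or_ne (h x) 0 with hx | hx
    · simpa [hx] using b0 x
    · simpa [hb x hx] using h1 x
  linarith [hρ.map_eq_add_map_sub h0 b1 hb]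

lemma exists_orthogonal_pair_of_pos (hρ : IsQuasiIntegral ρ) {f g : C_c(X, ℝ)}
    (hf0 : ∀ x, 0 ≤ f x) (hg0 : ∀ x, 0 ≤ g x) (hfg : ∀ x, f x * g x = 0)
    (hf : 0 < ρ f) (hg : 0 < ρ g) :
    ∃ f₁ f₂ : C_c(X, ℝ), (∀ x, 0 ≤ f₁ x) ∧ (∀ x, 0 ≤ f₂ x) ∧
      (∀ x, f₁ x * f₂ x = 0) ∧ ρ f₁ = 1 ∧ ρ f₂ = 1 := by
  refine ⟨(ρ f)⁻¹ • f, (ρ g)⁻¹ • g, fun x => ?_, fun x => ?_, fun x => ?_, ?_, ?_⟩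
  · exact mul_nonneg (inv_nonneg.mpr hf.le) (hf0 x)
  · exact mul_nonneg (inv_nonneg.mpr hg.le) (hg0 x)
  · simp only [CompactlySupportedContinuousMap.smul_apply, smul_eq_mul]
    linear_combination (ρ f)⁻¹ * (ρ g)⁻¹ * hfg x
  · rw [hρ.smul, inv_mul_cancel₀ hf.ne']
  · rw [hρ.smul, inv_mul_cancel₀ hg.ne']

lemma qiOpen_univ_le_of_map_orthogonal_eq_zero [LocallyCompactSpace X] [T2Space X]
    (hρ : IsQuasiIntegral ρ) {f : C_c(X, ℝ)} {U : Set X} (hU : IsOpen U)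
    (hfU : tsupport f ⊆ U)
    (hvanish : ∀ g : C_c(X, ℝ), (∀ x, 0 ≤ g x) → (∀ x, f x * g x = 0) → ρ g = 0) :
    qiOpen ρ univ ≤ qiOpen ρ U := by
  obtain ⟨w, hw1, hwU, hw01⟩ :=
    exists_cc_eqOn_one_of_isCompact_subset_isOpen f.hasCompactSupport' hU hfU
  refine iSup₂_le fun h hh => le_iSup₂_of_le w ⟨hw01, hwU⟩ (ENNReal.ofReal_le_ofReal ?_)
  obtain ⟨b, hb1, -, hb01⟩ := exists_cc_eqOn_one_of_isCompact_subset_isOpen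
    (h.hasCompactSupport'.union w.hasCompactSupport') isOpen_univ (subset_univ _)
  have hbh : ∀ x, h x ≠ 0 → b x = 1 := fun x hx => hb1 (Or.inl (subset_tsupport _ hx))
  have hbw : ∀ x, w x ≠ 0 → b x = 1 := fun x hx => hb1 (Or.inr (subset_tsupport _ hx))
  have hrest : ρ (b - w) = 0 := by
    refine hvanish _ (fun x => ?_) (fun x => ?_)
    · rcases eq_or_ne (w x) 0 with hx | hx
      · simpa [hx] using (hb01 x).1
      · simpa [hbw x hx] using (hw01 x).2
    · rcases eq_or_ne (f x) 0 with hx | hx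
      · rw [hx, zero_mul]
      · have hwx : w x = 1 := hw1 (subset_tsupport _ hx)
        rw [CompactlySupportedContinuousMap.sub_apply, hwx, hbw x (by rw [hwx]; norm_num),
          sub_self, mul_zero]
  calc ρ h ≤ ρ b := hρ.map_le_of_eqOn_one (fun x => (hh.1 x).1) (fun x => (hh.1 x).2)
        (fun x => (hb01 x).1) (fun x => (hb01 x).2) hbh
    _ = ρ w := by
        rw [hρ.map_eq_add_map_sub (fun x => (hw01 x).1) (fun x => (hb01 x).2) hbw, hrest,
          add_zero]

end IsQuasiIntegral

lemma qiOpen_mono (ρ : C_c(X, ℝ) → ℝ) {U V : Set X} (hUV : U ⊆ V) :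
    qiOpen ρ U ≤ qiOpen ρ V :=
  iSup₂_le fun f hf => le_iSup₂_of_le f ⟨hf.1, hf.2.trans hUV⟩ le_rfl

lemma qiMeas_le_qiOpen_univ (ρ : C_c(X, ℝ) → ℝ) (A : Set X) :
    qiMeas ρ A ≤ qiOpen ρ univ := by
  unfold qiMeas
  split_ifs
  · exact qiOpen_mono ρ (subset_univ A)
  · exact iInf₂_le univ ⟨isOpen_univ, subset_univ A⟩

lemma exists_isOpen_qiOpen_pos_lt_univ (ρ : C_c(X, ℝ) → ℝ) {A : Set X}
    (hpos : 0 < qiMeas ρ A) (hlt : qiMeas ρ A < qiOpen ρ univ) :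
    ∃ U, IsOpen U ∧ 0 < qiOpen ρ U ∧ qiOpen ρ U < qiOpen ρ univ := by
  unfold qiMeas at hpos hlt
  split_ifs at hpos hlt with hA
  · exact ⟨A, hA, hpos, hlt⟩
  · obtain ⟨U, hUlt⟩ := iInf_lt_iff.mp hlt
    obtain ⟨⟨hUo, hAU⟩, hUlt⟩ := iInf_lt_iff.mp hUlt
    exact ⟨U, hUo, hpos.trans_le (iInf₂_le U ⟨hUo, hAU⟩), hUlt⟩

lemma exists_pos_of_qiOpen_pos (ρ : C_c(X, ℝ) → ℝ) {U : Set X} (hpos : 0 < qiOpen ρ U) :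
    ∃ f : C_c(X, ℝ), (∀ x, 0 ≤ f x ∧ f x ≤ 1) ∧ tsupport f ⊆ U ∧ 0 < ρ f := by
  obtain ⟨f, hf⟩ := lt_iSup_iff.mp hpos
  obtain ⟨hfU, hf⟩ := lt_iSup_iff.mp hf
  exact ⟨f, hfU.1, hfU.2, ENNReal.ofReal_pos.mp hf⟩

lemma exists_mem_Ioo_of_three_ne {α : Type*} [LinearOrder α] {lo hi a b c : α}
    (ha : a ∈ Icc lo hi) (hb : b ∈ Icc lo hi) (hc : c ∈ Icc lo hi)
    (hab : a ≠ b) (hbc : b ≠ c) (hac : a ≠ c) :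
    ∃ m ∈ ({a, b, c} : Set α), m ∈ Ioo lo hi := by
  by_contra! hnot
  simp only [mem_insert_iff, mem_singleton_iff, mem_Ioo, forall_eq_or_imp, forall_eq] at hnot
  simp only [mem_Icc] at ha hb hc
  grind

end

theorem statement0_general {X : Type*} [TopologicalSpace X] [LocallyCompactSpace X] [T2Space X]
    (ρ : C_c(X, ℝ) → ℝ) (hρ : IsQuasiIntegral ρ)
    (hvals : ∃ A B C : Set X, (IsOpen A ∨ IsClosed A) ∧ (IsOpen B ∨ IsClosed B) ∧
      (IsOpen C ∨ IsClosed C) ∧ qiMeas ρ A ≠ qiMeas ρ B ∧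
      qiMeas ρ B ≠ qiMeas ρ C ∧ qiMeas ρ A ≠ qiMeas ρ C) :
    ∃ f₁ f₂ : C_c(X, ℝ), (∀ x, 0 ≤ f₁ x) ∧ (∀ x, 0 ≤ f₂ x) ∧
      (∀ x, f₁ x * f₂ x = 0) ∧ ρ f₁ = 1 ∧ ρ f₂ = 1 := by
  obtain ⟨A, B, C, -, -, -, hAB, hBC, hAC⟩ := hvals
  have hbound (S : Set X) : qiMeas ρ S ∈ Icc 0 (qiOpen ρ univ) :=
    ⟨zero_le, qiMeas_le_qiOpen_univ ρ S⟩
  obtain ⟨m, hm, hm0, hmT⟩ :=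
    exists_mem_Ioo_of_three_ne (hbound A) (hbound B) (hbound C) hAB hBC hAC
  obtain ⟨S, rfl⟩ : ∃ S, qiMeas ρ S = m := by
    rcases hm with rfl | rfl | rfl <;> exact ⟨_, rfl⟩
  obtain ⟨U, hU, hU0, hUT⟩ := exists_isOpen_qiOpen_pos_lt_univ ρ hm0 hmT
  obtain ⟨f, hf01, hfU, hf⟩ := exists_pos_of_qiOpen_pos ρ hU0
  by_contra hnone
  have hvanish (g : C_c(X, ℝ)) (hg0 : ∀ x, 0 ≤ g x) (hfg : ∀ x, f x * g x = 0) : ρ g = 0 :=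
    (hρ.pos g hg0).antisymm' <| not_lt.mp fun hg =>
      hnone (hρ.exists_orthogonal_pair_of_pos (fun x => (hf01 x).1) hg0 hfg hf hg)
  exact hUT.not_ge (hρ.qiOpen_univ_le_of_map_orthogonal_eq_zero hU hfU hvanish)

theorem statement0 {X : Type*} [TopologicalSpace X] [LocallyCompactSpace X] [T2Space X]
    [ConnectedSpace X] (ρ : C_c(X, ℝ) → ℝ) (hρ : IsQuasiIntegral ρ)
    (hvals : ∃ A B C : Set X, (IsOpen A ∨ IsClosed A) ∧ (IsOpen B ∨ IsClosed B) ∧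
      (IsOpen C ∨ IsClosed C) ∧ qiMeas ρ A ≠ qiMeas ρ B ∧
      qiMeas ρ B ≠ qiMeas ρ C ∧ qiMeas ρ A ≠ qiMeas ρ C) :
    ∃ f₁ f₂ : C_c(X, ℝ), (∀ x, 0 ≤ f₁ x) ∧ (∀ x, 0 ≤ f₂ x) ∧
      (∀ x, f₁ x * f₂ x = 0) ∧ ρ f₁ = 1 ∧ ρ f₂ = 1 :=
  statement0_general ρ hρ hvals

end QLF
end

section
/- Let X and Y be locally compact, connected Hausdorff spaces, ρ a quasi-integral on C_c(X) with corresponding topological measure μ, and η a quasi-integral on C_c(Y) with corresponding topological measure ν. Then sup{(η × ρ)(f) : f ∈ C_c(X × Y), 0 ≤ f ≤ 1} = μ(X)·ν(Y) and sup{(ρ × η)(f) : f ∈ C_c(X × Y), 0 ≤ f ≤ 1} = μ(X)·ν(Y) (as values in [0,∞]); that is, (ν × μ)(X × Y) = (μ × ν)(X × Y) = μ(X)·ν(Y). -/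
open scoped ENNReal CompactlySupported
open CompactlySupportedContinuousMap

/-!
If `0 ≤ f ≤ 1` on `X × Y`, every value `ρ(f_y)` lies in `[0, μ(X)]`; by homogeneity and
positivity of `η` this gives `(η × ρ)(f) ≤ μ(X) ν(Y)`. Conversely, for tensors
`(η × ρ)(g ⊗ h) = ρ(g) η(h)`, and taking suprema over `g` and `h` gives the reverse
inequality. Composing with the swap `X × Y ≃ₜ Y × X` turns `ρ × η` into a product of the first kind.
-/

namespace QLF

section QuasiIntegral

variable {X : Type*} [TopologicalSpace X] {ρ : C_c(X, ℝ) → ℝ}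

theorem IsQuasiIntegral.map_zero (hρ : IsQuasiIntegral ρ) : ρ 0 = 0 := by
  simpa using hρ.smul 0 0

theorem ofReal_le_qiOpen_univ {f : C_c(X, ℝ)} (hf : ∀ x, 0 ≤ f x ∧ f x ≤ 1) :
    ENNReal.ofReal (ρ f) ≤ qiOpen ρ Set.univ :=
  le_iSup₂_of_le f ⟨hf, Set.subset_univ _⟩ le_rfl

theorem IsQuasiIntegral.ofReal_le_ofReal_mul_qiOpen_univ (hρ : IsQuasiIntegral ρ)
    {f : C_c(X, ℝ)} {c : ℝ} (hf : ∀ x, 0 ≤ f x ∧ f x ≤ c) :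
    ENNReal.ofReal (ρ f) ≤ ENNReal.ofReal c * qiOpen ρ Set.univ := by
  rcases le_or_gt c 0 with hc | hc
  · have hf0 : f = 0 := by
      ext x
      exact le_antisymm ((hf x).2.trans hc) (hf x).1
    simp [hf0, hρ.map_zero]
  have hscaled : ∀ x, 0 ≤ (c⁻¹ • f) x ∧ (c⁻¹ • f) x ≤ 1 := fun x => by
    simp only [coe_smul, Pi.smul_apply, smul_eq_mul]
    exact ⟨mul_nonneg (inv_nonneg.mpr hc.le) (hf x).1, (inv_mul_le_one₀ hc).mpr (hf x).2⟩
  have hρf : ρ f = c * ρ (c⁻¹ • f) := by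
    rw [← hρ.smul, smul_smul, mul_inv_cancel₀ hc.ne', one_smul]
  rw [hρf, ENNReal.ofReal_mul hc.le]
  gcongr
  exact ofReal_le_qiOpen_univ hscaled

theorem IsQuasiIntegral.ofReal_le_mul_qiOpen_univ (hρ : IsQuasiIntegral ρ)
    {f : C_c(X, ℝ)} {c : ℝ≥0∞} (hf₀ : ∀ x, 0 ≤ f x)
    (hfc : ∀ x, ENNReal.ofReal (f x) ≤ c) :
    ENNReal.ofReal (ρ f) ≤ c * qiOpen ρ Set.univ := by
  set b := ‖f.toBoundedContinuousFunction‖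
  have hfb : ∀ x, f x ≤ b := fun x =>
    (le_abs_self _).trans (f.toBoundedContinuousFunction.norm_coe_le_norm x)
  have hbc : ENNReal.ofReal b ≤ c := by
    rcases eq_or_ne c ⊤ with rfl | hc
    · exact le_top
    rw [ENNReal.ofReal_le_iff_le_toReal hc,
      BoundedContinuousFunction.norm_le ENNReal.toReal_nonneg]
    exact fun x => (Real.norm_of_nonneg (hf₀ x)).trans_le
      ((ENNReal.ofReal_le_iff_le_toReal hc).mp (hfc x))
  calc ENNReal.ofReal (ρ f) ≤ ENNReal.ofReal b * qiOpen ρ Set.univ :=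
        hρ.ofReal_le_ofReal_mul_qiOpen_univ fun x => ⟨hf₀ x, hfb x⟩
    _ ≤ c * qiOpen ρ Set.univ := by gcongr

theorem qiMeas_univ : qiMeas ρ Set.univ = qiOpen ρ Set.univ := by
  rw [qiMeas, if_pos isOpen_univ]

end QuasiIntegral

section Product

variable {X Y : Type*} [TopologicalSpace X] [T2Space X] [TopologicalSpace Y]
  {ρ : C_c(X, ℝ) → ℝ} {η : C_c(Y, ℝ) → ℝ}

/-- The bounds we need on `T_ρ(f)` hold in both branches of `TCc`, so its continuity is never
needed. -/
theorem TCc_apply_eq_zero_or (f : C_c(X × Y, ℝ)) (y : Y) :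
    TCc ρ f y = 0 ∨ TCc ρ f y = ρ (fiberY f y) := by
  unfold TCc
  split_ifs
  exacts [Or.inr rfl, Or.inl rfl]

theorem ofReal_prodQI_le (hρ : IsQuasiIntegral ρ) (hη : IsQuasiIntegral η)
    {f : C_c(X × Y, ℝ)} (hf : ∀ p, 0 ≤ f p ∧ f p ≤ 1) :
    ENNReal.ofReal (prodQI η ρ f) ≤ qiOpen ρ Set.univ * qiOpen η Set.univ := by
  have hT : ∀ y, 0 ≤ TCc ρ f y ∧ ENNReal.ofReal (TCc ρ f y) ≤ qiOpen ρ Set.univ := by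
    intro y
    rcases TCc_apply_eq_zero_or f y with h | h <;> rw [h]
    · simp
    · exact ⟨hρ.pos _ fun x => (hf (x, y)).1, ofReal_le_qiOpen_univ fun x => hf (x, y)⟩
  exact hη.ofReal_le_mul_qiOpen_univ (fun y => (hT y).1) (fun y => (hT y).2)

theorem fiberY_tensor (g : C_c(X, ℝ)) (h : C_c(Y, ℝ)) (y : Y) :
    fiberY (tensor g h) y = h y • g := by
  ext x
  simp [fiberY, tensor, mul_comm]

theorem TCc_tensor (hρ : IsQuasiIntegral ρ) (g : C_c(X, ℝ)) (h : C_c(Y, ℝ)) :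
    TCc ρ (tensor g h) = ρ g • h := by
  have hT : Tmap ρ (tensor g h) = ⇑(ρ g • h) := by
    funext y
    simp only [Tmap, fiberY_tensor, hρ.smul, coe_smul, Pi.smul_apply, smul_eq_mul, mul_comm]
  rw [TCc, dif_pos (hT ▸ ⟨(ρ g • h).continuous, (ρ g • h).hasCompactSupport'⟩)]
  ext y
  exact congrFun hT y

theorem prodQI_tensor (hρ : IsQuasiIntegral ρ) (hη : IsQuasiIntegral η)
    (g : C_c(X, ℝ)) (h : C_c(Y, ℝ)) : prodQI η ρ (tensor g h) = ρ g * η h := by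
  rw [prodQI, TCc_tensor hρ, hη.smul]

theorem qiOpen_univ_mul_le_qiOpen_prodQI (hρ : IsQuasiIntegral ρ) (hη : IsQuasiIntegral η) :
    qiOpen ρ Set.univ * qiOpen η Set.univ ≤ qiOpen (prodQI η ρ) Set.univ := by
  simp_rw [qiOpen, ENNReal.iSup_mul, ENNReal.mul_iSup]
  refine iSup₂_le fun g hg => iSup₂_le fun h hh => ?_
  rw [← ENNReal.ofReal_mul (hρ.pos g fun x => (hg.1 x).1), ← prodQI_tensor hρ hη]
  exact ofReal_le_qiOpen_univ fun p =>
    ⟨mul_nonneg (hg.1 p.1).1 (hh.1 p.2).1, mul_le_one₀ (hg.1 p.1).2 (hh.1 p.2).1 (hh.1 p.2).2⟩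

theorem qiOpen_prodQI_univ (hρ : IsQuasiIntegral ρ) (hη : IsQuasiIntegral η) :
    qiOpen (prodQI η ρ) Set.univ = qiOpen ρ Set.univ * qiOpen η Set.univ :=
  le_antisymm (iSup₂_le fun _ hf => ofReal_prodQI_le hρ hη hf.1)
    (qiOpen_univ_mul_le_qiOpen_prodQI hρ hη)

end Product

theorem qiOpen_univ_comp_homeomorph {Z W : Type*} [TopologicalSpace Z] [TopologicalSpace W]
    (σ : C_c(W, ℝ) → ℝ) (e : W ≃ₜ Z) :
    qiOpen (fun f : C_c(Z, ℝ) => σ (f.comp e.toCocompactMap)) Set.univ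
      = qiOpen σ Set.univ := by
  refine le_antisymm (iSup₂_le fun f hf => ?_) (iSup₂_le fun g hg => ?_)
  · exact ofReal_le_qiOpen_univ fun w => hf.1 (e w)
  · have hg' : g = (g.comp e.symm.toCocompactMap).comp e.toCocompactMap := by
      ext w
      simp
    rw [hg']
    exact ofReal_le_qiOpen_univ (ρ := fun f : C_c(Z, ℝ) => σ (f.comp e.toCocompactMap))
      fun z => hg.1 (e.symm z)

theorem prodQI'_eq_prodQI_comp_prodComm {X Y : Type*} [TopologicalSpace X]
    [TopologicalSpace Y] [T2Space Y] (ρ : C_c(X, ℝ) → ℝ) (η : C_c(Y, ℝ) → ℝ) :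
    prodQI' ρ η = fun f => prodQI ρ η (f.comp (Homeomorph.prodComm Y X).toCocompactMap) :=
  rfl

theorem qiOpen_prodQI'_univ {X Y : Type*} [TopologicalSpace X] [T2Space X]
    [TopologicalSpace Y] [T2Space Y] {ρ : C_c(X, ℝ) → ℝ} {η : C_c(Y, ℝ) → ℝ}
    (hρ : IsQuasiIntegral ρ) (hη : IsQuasiIntegral η) :
    qiOpen (prodQI' ρ η) Set.univ = qiOpen ρ Set.univ * qiOpen η Set.univ := by
  rw [prodQI'_eq_prodQI_comp_prodComm, qiOpen_univ_comp_homeomorph, qiOpen_prodQI_univ hη hρ,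
    mul_comm]

theorem statement6_general {X Y : Type*}
    [TopologicalSpace X] [T2Space X]
    [TopologicalSpace Y] [T2Space Y]
    (ρ : C_c(X, ℝ) → ℝ) (η : C_c(Y, ℝ) → ℝ)
    (hρ : IsQuasiIntegral ρ) (hη : IsQuasiIntegral η) :
    qiMeas (prodQI η ρ) (Set.univ : Set (X × Y))
      = qiMeas ρ (Set.univ : Set X) * qiMeas η (Set.univ : Set Y) ∧
    qiMeas (prodQI' ρ η) (Set.univ : Set (X × Y))
      = qiMeas ρ (Set.univ : Set X) * qiMeas η (Set.univ : Set Y) := by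
  simp only [qiMeas_univ]
  exact ⟨qiOpen_prodQI_univ hρ hη, qiOpen_prodQI'_univ hρ hη⟩

theorem statement6 {X Y : Type*}
    [TopologicalSpace X] [LocallyCompactSpace X] [T2Space X] [ConnectedSpace X]
    [TopologicalSpace Y] [LocallyCompactSpace Y] [T2Space Y] [ConnectedSpace Y]
    (ρ : C_c(X, ℝ) → ℝ) (η : C_c(Y, ℝ) → ℝ)
    (hρ : IsQuasiIntegral ρ) (hη : IsQuasiIntegral η) :
    qiMeas (prodQI η ρ) (Set.univ : Set (X × Y))
      = qiMeas ρ (Set.univ : Set X) * qiMeas η (Set.univ : Set Y) ∧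
    qiMeas (prodQI' ρ η) (Set.univ : Set (X × Y))
      = qiMeas ρ (Set.univ : Set X) * qiMeas η (Set.univ : Set Y) :=
  statement6_general ρ η hρ hη

end QLF
end
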